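/- arXiv:2602.23256 — 3 statements merged into one kernel-verified Lean document; each statement's English description precedes it below -/
import Mathlib

section
/- Let G be a linearly ordered abelian group, m, n ≥ 2 coprime integers, and a ∈ G. Then 𝔰ₙ(m•a) = 𝔰ₙ(a). -/
/-- A convex subgroup of a linearly ordered abelian group. -/
def IsConvexSubgroup {G : Type*} [AddCommGroup G] [LinearOrder G] [IsOrderedAddMonoid G] (H : AddSubgroup G) : Prop :=
  ∀ ⦃x y : G⦄, 0 ≤ x → x ≤ y → y ∈ H → x ∈ H

/-- The type of convex subgroups, ordered by inclusion. -/
abbrev ConvexSubgroup (G : Type*) [AddCommGroup G] [LinearOrder G] [IsOrderedAddMonoid G] :=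
  {H : AddSubgroup G // IsConvexSubgroup H}

/-- Membership in the set `H + nG`. -/
def memHn {G : Type*} [AddCommGroup G] (H : AddSubgroup G) (n : ℕ) (a : G) : Prop :=
  ∃ h ∈ H, ∃ x : G, a = h + n • x

/-- `IsS n a s` says that `s` (an element of the convex subgroups with a formal least
element `⊥` adjoined) is the value `𝔰ₙ(a)`: it is `⊥` if `a ∈ nG`, and otherwise it is
the largest convex subgroup `H` with `a ∉ H + nG`. -/
def IsS {G : Type*} [AddCommGroup G] [LinearOrder G] [IsOrderedAddMonoid G] (n : ℕ) (a : G)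
    (s : WithBot (ConvexSubgroup G)) : Prop :=
  ((∃ x : G, a = n • x) ∧ s = ⊥) ∨
  (¬ (∃ x : G, a = n • x) ∧ ∃ H : ConvexSubgroup G, s = ↑H ∧ ¬ memHn H.1 n a ∧
      ∀ H' : ConvexSubgroup G, ¬ memHn H'.1 n a → H' ≤ H)

/-
`𝔰ₙ(a)` depends on `a` only through the family of conditions `a ∈ H + nG`, and multiplication
by `m` coprime to `n` is invertible modulo `nG` (Bézout), so it preserves each of them.
-/

theorem memHn_bot_iff {G : Type*} [AddCommGroup G] (n : ℕ) (a : G) :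
    memHn ⊥ n a ↔ ∃ x : G, a = n • x := by
  simp [memHn]

theorem memHn_nsmul_iff {G : Type*} [AddCommGroup G] {m n : ℕ} (hcop : Nat.Coprime m n)
    (H : AddSubgroup G) (a : G) : memHn H n (m • a) ↔ memHn H n a := by
  constructor
  · rintro ⟨h, hh, x, hx⟩
    obtain ⟨p, q, hpq⟩ := Nat.isCoprime_iff_coprime.mpr hcop
    refine ⟨p • h, H.zsmul_mem hh p, p • x + q • a, ?_⟩
    calc a = (p * m + q * n) • a := by rw [hpq, one_zsmul]
      _ = p • (m • a) + n • (q • a) := by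
        rw [add_zsmul, mul_zsmul, mul_comm, mul_zsmul, natCast_zsmul, natCast_zsmul]
      _ = p • h + n • (p • x + q • a) := by
        rw [hx, smul_add, smul_add, smul_comm p n x]; abel
  · rintro ⟨h, hh, x, hx⟩
    exact ⟨m • h, H.nsmul_mem hh m, m • x, by rw [hx, smul_add, smul_comm m n x]⟩

theorem IsS.unique_of_memHn_iff {G : Type*} [AddCommGroup G] [LinearOrder G] [IsOrderedAddMonoid G]
    {n : ℕ} {a b : G} (hab : ∀ H : AddSubgroup G, memHn H n a ↔ memHn H n b)
    {s t : WithBot (ConvexSubgroup G)} (hs : IsS n a s) (ht : IsS n b t) : s = t := by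
  have hdiv := hab ⊥
  rw [memHn_bot_iff, memHn_bot_iff] at hdiv
  rcases hs with ⟨ha, rfl⟩ | ⟨ha, Ha, rfl, hHa, hmax_a⟩ <;>
    rcases ht with ⟨hb, rfl⟩ | ⟨hb, Hb, rfl, hHb, hmax_b⟩
  · rfl
  · exact absurd (hdiv.mp ha) hb
  · exact absurd (hdiv.mpr hb) ha
  · exact congrArg _ <| le_antisymm (hmax_b Ha (mt (hab Ha.1).mpr hHa))
      (hmax_a Hb (mt (hab Hb.1).mp hHb))

theorem stmt11_general {G : Type*} [AddCommGroup G] [LinearOrder G] [IsOrderedAddMonoid G] (m n : ℕ)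
    (hcop : Nat.Coprime m n) (a : G) (u v : WithBot (ConvexSubgroup G))
    (hu : IsS n (m • a) u) (hv : IsS n a v) :
    u = v :=
  IsS.unique_of_memHn_iff (memHn_nsmul_iff hcop · a) hu hv

theorem stmt11 {G : Type*} [AddCommGroup G] [LinearOrder G] [IsOrderedAddMonoid G] (m n : ℕ) (hm : 2 ≤ m) (hn : 2 ≤ n)
    (hcop : Nat.Coprime m n) (a : G) (u v : WithBot (ConvexSubgroup G))
    (hu : IsS n (m • a) u) (hv : IsS n a v) :
    u = v :=
  stmt11_general m n hcop a u v hu hv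
end

section
/- Let G be a linearly ordered abelian group, n ≥ 2, and H a nonempty element of 𝒮ₙ = image of 𝔰ₙ. Define H^{[n]} = ⋂ over convex subgroups H' with H' ⊋ H of (H' + nG). Then {a ∈ G : 𝔰ₙ(a) ≤ H} = H^{[n]}. -/
section

variable {G : Type*} [AddCommGroup G] [LinearOrder G] [IsOrderedAddMonoid G]

theorem IsConvexSubgroup.le_total {A B : AddSubgroup G} (hA : IsConvexSubgroup A)
    (hB : IsConvexSubgroup B) : A ≤ B ∨ B ≤ A := by
  refine or_iff_not_imp_left.2 fun hAB y hyB => ?_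
  obtain ⟨x, hxA, hxB⟩ := SetLike.not_le_iff_exists.1 hAB
  -- by convexity of `B`, a witness `x ∈ A \ B` dominates every element of `B` in absolute value
  have hyx : |y| ≤ |x| := le_of_not_ge fun hxy =>
    hxB (abs_mem_iff.1 (hB (abs_nonneg x) hxy (abs_mem_iff.2 hyB)))
  exact abs_mem_iff.1 (hA (abs_nonneg y) hyx (abs_mem_iff.2 hxA))

theorem memHn_of_eq_nsmul {M : Type*} [AddCommGroup M] (H : AddSubgroup M) {n : ℕ} {a x : M}
    (hx : a = n • x) : memHn H n a :=
  ⟨0, H.zero_mem, x, by rw [hx, zero_add]⟩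

theorem le_iff_forall_lt_memHn {n : ℕ} {a : G} {K : ConvexSubgroup G} (hK : ¬ memHn K.1 n a)
    (hKmax : ∀ H' : ConvexSubgroup G, ¬ memHn H'.1 n a → H' ≤ K) (H : ConvexSubgroup G) :
    K ≤ H ↔ ∀ H' : ConvexSubgroup G, H < H' → memHn H'.1 n a := by
  constructor
  · intro hKH H' hHH'
    by_contra hH'
    exact ((hKmax H' hH').trans hKH).not_gt hHH'
  · intro h
    by_contra hKH
    have hHK : H < K := lt_of_le_not_ge ((IsConvexSubgroup.le_total K.2 H.2).resolve_left hKH) hKH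
    exact hK (h K hHK)

end

theorem stmt15_general {G : Type*} [AddCommGroup G] [LinearOrder G] [IsOrderedAddMonoid G] (n : ℕ)
    (s : G → WithBot (ConvexSubgroup G)) (hs : ∀ a : G, IsS n a (s a))
    (H : ConvexSubgroup G) :
    {a : G | s a ≤ ↑H} = {a : G | ∀ H' : ConvexSubgroup G, H < H' → memHn H'.1 n a} := by
  ext a
  rcases hs a with ⟨⟨x, hx⟩, hbot⟩ | ⟨-, K, hK, hKa, hKmax⟩
  · simpa [hbot] using fun (H' : ConvexSubgroup G) _ => memHn_of_eq_nsmul H'.1 hx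
  · simpa only [Set.mem_ofPred_eq, hK, WithBot.coe_le_coe] using
      le_iff_forall_lt_memHn hKa hKmax H

/-- `{a : 𝔰ₙ(a) ≤ H} = H^{[n]}`, where `H^{[n]}` is the intersection of `H' + nG` over the
convex subgroups `H'` strictly containing `H`. -/
theorem stmt15 {G : Type*} [AddCommGroup G] [LinearOrder G] [IsOrderedAddMonoid G] (n : ℕ) (hn : 2 ≤ n)
    (s : G → WithBot (ConvexSubgroup G)) (hs : ∀ a : G, IsS n a (s a))
    (H : ConvexSubgroup G) (hH : ∃ a : G, s a = ↑H) :
    {a : G | s a ≤ ↑H} = {a : G | ∀ H' : ConvexSubgroup G, H < H' → memHn H'.1 n a} :=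
  stmt15_general n s hs H
end

section
/- Let G be a linearly ordered abelian group, n ≥ 2, m ≥ 2, a ∈ G, and H a convex subgroup of G. Then a ∈ H^{[m]} if and only if n•a ∈ H^{[nm]}, where H^{[k]} = ⋂ over convex subgroups H' ⊋ H of (H' + kG). -/
section ConvexSubgroup

variable {G : Type*} [AddCommGroup G] [LinearOrder G] [IsOrderedAddMonoid G] {H : AddSubgroup G}

theorem IsConvexSubgroup.mem_of_nsmul_mem (hH : IsConvexSubgroup H) {n : ℕ} (hn : n ≠ 0) {b : G}
    (hb : n • b ∈ H) : b ∈ H := by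
  have habs : |b| ≤ |n • b| := by
    rw [abs_nsmul]
    exact le_self_nsmul (abs_nonneg b) hn
  exact abs_mem_iff.1 (hH (abs_nonneg b) habs (abs_mem_iff.2 hb))

theorem IsConvexSubgroup.memHn_iff_nsmul (hH : IsConvexSubgroup H) {n : ℕ} (hn : n ≠ 0) (m : ℕ)
    (a : G) : memHn H m a ↔ memHn H (n * m) (n • a) := by
  constructor
  · rintro ⟨h, hh, x, rfl⟩
    exact ⟨n • h, H.nsmul_mem hh n, x, by rw [smul_add, mul_nsmul']⟩
  · rintro ⟨h, hh, x, hx⟩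
    have hdiff : n • (a - m • x) = h := by
      rw [smul_sub, ← mul_nsmul', hx, add_sub_cancel_right]
    exact ⟨a - m • x, hH.mem_of_nsmul_mem hn (hdiff ▸ hh), x, (sub_add_cancel a _).symm⟩

end ConvexSubgroup

theorem stmt17_general {G : Type*} [AddCommGroup G] [LinearOrder G] [IsOrderedAddMonoid G] (n m : ℕ) (hn : 2 ≤ n)
    (H : ConvexSubgroup G) (a : G) :
    (∀ H' : ConvexSubgroup G, H < H' → memHn H'.1 m a) ↔
      (∀ H' : ConvexSubgroup G, H < H' → memHn H'.1 (n * m) (n • a)) :=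
  forall_congr' fun H' => imp_congr_right fun _ => H'.2.memHn_iff_nsmul (by omega) m a

/-- `a ∈ H^{[m]} ↔ n•a ∈ H^{[nm]}`. -/
theorem stmt17 {G : Type*} [AddCommGroup G] [LinearOrder G] [IsOrderedAddMonoid G] (n m : ℕ) (hn : 2 ≤ n) (hm : 2 ≤ m)
    (H : ConvexSubgroup G) (a : G) :
    (∀ H' : ConvexSubgroup G, H < H' → memHn H'.1 m a) ↔
      (∀ H' : ConvexSubgroup G, H < H' → memHn H'.1 (n * m) (n • a)) :=
  stmt17_general n m hn H a
end
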